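/- In oriented Bernoulli percolation on L at parameter p, for all integers k, s, n ≥ 1, P_p(R_n ≤ −k·s) ≤ (1 − V_p(s,n))^k, where R_n is the right-most point at height n connected from the nonpositive part of level 0 and V_p(s,n) is the probability of a vertical crossing of [0,s]×[0,n]. -/

import Mathlib

/-!
If `R_n ≤ -ks`, none of the `k + 1` boxes `[-is, -is + s] × [0, n]`, `0 ≤ i ≤ k`, has an open
vertical crossing from some `(x, 0)` with `x ≤ 0` to some `(y, n)` with `y > -ks`. The boxes share
no edge, so these events are independent. For `0 < i < k` every vertical crossing qualifies, and a
translation or a reflection of the lattice shows that this has probability at least `V(s, n)`.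
The two end boxes only contribute `1 - V(s, n)` together: a crossing of `[0, s] × [0, n]` starts at
`0` or at some `x ≥ 1`. The first lies in the event for box `0`; when `ks + n` is even, the flip
`(x, y) ↦ (x - ks, n - y)` carries the second into the event for box `k`, and Harris' inequality
bounds the product of the two complementary probabilities by `1 - V(s, n)`. When `ks + n` is odd,
parity forbids a crossing of box `k` to end at `-ks`, so box `k` alone contributes `1 - V(s, n)`.
-/


open MeasureTheory

namespace OrientedPerc

/-- Vertices of the plane; the lattice `L` consists of those with even coordinate sum. -/
abbrev Vtx := ℤ × ℤ

/-- An oriented edge is given by its base vertex and a direction: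
`true` for the edge to `x + (1,1)`, `false` for the edge to `x + (-1,1)`. -/
abbrev Edge := Vtx × Bool

/-- A percolation configuration: each oriented edge is open (`true`) or closed. -/
abbrev Config := Edge → Bool

/-- The endpoint of an oriented edge. -/
def tip (e : Edge) : Vtx := e.1 + (if e.2 then (1, 1) else (-1, 1))

/-- One open oriented step from `x` to `y`. -/
def Step (ω : Config) (x y : Vtx) : Prop :=
  ∃ b : Bool, ω (x, b) = true ∧ y = tip (x, b)

/-- `x → y`: there is an open oriented path from `x` to `y`. -/
def Conn (ω : Config) (x y : Vtx) : Prop := Relation.ReflTransGen (Step ω) x y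

/-- `x → y` using only vertices in the set `S`. -/
def ConnIn (S : Set Vtx) (ω : Config) (x y : Vtx) : Prop :=
  x ∈ S ∧ Relation.ReflTransGen (fun a b => Step ω a b ∧ b ∈ S) x y

/-- The box `[a,b] × [c,d]` intersected with the lattice `L`. -/
def box (a b c d : ℤ) : Set Vtx :=
  {v | a ≤ v.1 ∧ v.1 ≤ b ∧ c ≤ v.2 ∧ v.2 ≤ d ∧ Even (v.1 + v.2)}

/-- The box `[a,b] × [c,d]` is crossed vertically (bottom to top). -/
def CrossedVert (ω : Config) (a b c d : ℤ) : Prop :=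
  ∃ x y : Vtx, x.2 = c ∧ y.2 = d ∧ ConnIn (box a b c d) ω x y

/-- The box `[a,b] × [c,d]` is crossed from left to right. -/
def CrossedLR (ω : Config) (a b c d : ℤ) : Prop :=
  ∃ x y : Vtx, x.1 = a ∧ y.1 = b ∧ ConnIn (box a b c d) ω x y

/-- `μ` is Bernoulli oriented bond percolation with parameter `p`:
the states of edges are i.i.d., each open with probability `p`. -/
def IsBernoulli (μ : Measure Config) (p : ℝ) : Prop :=
  IsProbabilityMeasure μ ∧ p ∈ Set.Icc (0 : ℝ) 1 ∧
    ∀ (s : Finset Edge) (f : Edge → Bool),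
      (μ {ω | ∀ e ∈ s, ω e = f e}).toReal = ∏ e ∈ s, (if f e then p else 1 - p)

/-- Probability of a vertical crossing of `[0,m] × [0,n]`. -/
noncomputable def V (μ : Measure Config) (m n : ℕ) : ℝ :=
  (μ {ω | CrossedVert ω 0 (m : ℤ) 0 (n : ℤ)}).toReal

/-- Probability of a left-right crossing of `[0,m] × [0,n]`. -/
noncomputable def H (μ : Measure Config) (m n : ℕ) : ℝ :=
  (μ {ω | CrossedLR ω 0 (m : ℤ) 0 (n : ℤ)}).toReal

/-- The event `R_n ≥ t`: some `(y,0)` with `y ≤ 0` even is connected to some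
`(x,n)` with `x ≥ t`. -/
def Rge (ω : Config) (n t : ℤ) : Prop :=
  ∃ x y : ℤ, Even y ∧ y ≤ 0 ∧ t ≤ x ∧ Conn ω (y, 0) (x, n)

/-- The event `0 → ℓ_n`. -/
def ConnToLine (ω : Config) (n : ℤ) : Prop := ∃ x : ℤ, Conn ω (0, 0) (x, n)

end OrientedPerc

open ProbabilityTheory Function

section Restrict

variable {ι : Type*} {α : ι → Type*} {A : Set (∀ i, α i)} {E : Finset ι}

lemma DependsOn.preimage_restrict_image (hA : DependsOn (· ∈ A) (E : Set ι)) :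
    E.restrict ⁻¹' (E.restrict '' A) = A := by
  refine Set.Subset.antisymm ?_ (Set.subset_preimage_image _ _)
  rintro ω ⟨ω', hω', hres⟩
  exact (hA fun i hi => congrFun hres ⟨i, hi⟩).mp hω'

lemma DependsOn.mem_compl (hA : DependsOn (· ∈ A) (E : Set ι)) :
    DependsOn (· ∈ Aᶜ) (E : Set ι) :=
  fun _ _ h => by simp only [Set.mem_compl_iff, hA h]

lemma DependsOn.measurableSet [∀ i, MeasurableSpace (α i)] [∀ i, Countable (α i)]
    [∀ i, MeasurableSingletonClass (α i)] (hA : DependsOn (· ∈ A) (E : Set ι)) :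
    MeasurableSet A := by
  rw [← hA.preimage_restrict_image]
  exact E.measurable_restrict (Set.to_countable _).measurableSet

lemma IsUpperSet.image_restrict [∀ i, Preorder (α i)] (hA : IsUpperSet A) (E : Finset ι) :
    IsUpperSet (E.restrict '' A) := by
  classical
  rintro _ τ hτ ⟨ω, hω, rfl⟩
  refine ⟨updateFinset ω E τ, hA (fun i => ?_) hω, restrict_updateFinset ω τ⟩
  simp only [updateFinset_def]
  split_ifs with hi
  · exact hτ ⟨i, hi⟩
  · exact le_rfl

end Restrict

/-- Harris' inequality: the point weights `w` of `Measure.pi ν` satisfy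
`w a * w b = w (a ⊓ b) * w (a ⊔ b)`, so the FKG inequality applies. -/
theorem IsUpperSet.measureReal_pi_mul_le_inter {ι : Type*} [Fintype ι] {α : ι → Type*}
    [∀ i, LinearOrder (α i)] [∀ i, Finite (α i)] [∀ i, MeasurableSpace (α i)]
    [∀ i, MeasurableSingletonClass (α i)] (ν : ∀ i, Measure (α i))
    [∀ i, IsProbabilityMeasure (ν i)] {A B : Set (∀ i, α i)} (hA : IsUpperSet A)
    (hB : IsUpperSet B) :
    (Measure.pi ν).real A * (Measure.pi ν).real B ≤ (Measure.pi ν).real (A ∩ B) := by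
  classical
  have := Fintype.ofFinite (∀ i, α i)
  set w : (∀ i, α i) → ℝ := fun a => (Measure.pi ν).real {a}
  have hsum (S : Set (∀ i, α i)) : (Measure.pi ν).real S = ∑ a, w a * S.indicator 1 a := by
    simp [w, Set.indicator_apply, ← Finset.sum_filter]
  have hmono {S : Set (∀ i, α i)} (hS : IsUpperSet S) :
      Monotone (S.indicator (1 : (∀ i, α i) → ℝ)) := fun a b hab => by
    by_cases ha : a ∈ S
    · simp [ha, hS hab ha]
    · simp [ha, Set.indicator_nonneg]
  have hw (a b : ∀ i, α i) : w a * w b ≤ w (a ⊓ b) * w (a ⊔ b) := by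
    simp only [w, measureReal_def, Measure.pi_singleton, ENNReal.toReal_prod,
      ← Finset.prod_mul_distrib]
    refine le_of_eq (Finset.prod_congr rfl fun i _ => ?_)
    rcases le_total (a i) (b i) with h | h
    · simp [inf_of_le_left h, sup_of_le_right h]
    · simp [inf_of_le_right h, sup_of_le_left h, mul_comm]
  have htot : ∑ a, w a = 1 := by simp [w]
  have := fkg (A.indicator 1) (B.indicator 1) w (fun _ => measureReal_nonneg)
    (Set.indicator_nonneg fun _ _ => zero_le_one) (Set.indicator_nonneg fun _ _ => zero_le_one)
    (hmono hA) (hmono hB) hw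
  simp only [htot, one_mul, ← Pi.mul_apply (A.indicator 1), ← Set.inter_indicator_one] at this
  rwa [hsum, hsum, hsum]

lemma prod_range_succ_le_pow_of_ends {f : ℕ → ℝ} {c : ℝ} {k : ℕ} (hk : 1 ≤ k)
    (hf : ∀ i, 0 ≤ f i) (hmid : ∀ i, 0 < i → i < k → f i ≤ c) (hends : f 0 * f k ≤ c) :
    ∏ i ∈ Finset.range (k + 1), f i ≤ c ^ k := by
  obtain ⟨m, rfl⟩ := Nat.exists_eq_add_of_le' hk
  have hmid' : ∏ i ∈ Finset.range m, f (i + 1) ≤ c ^ m := by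
    refine (Finset.prod_le_prod (fun i _ => hf (i + 1)) fun i hi => hmid (i + 1) i.succ_pos ?_)
      |>.trans_eq (by rw [Finset.prod_const, Finset.card_range])
    simpa using Finset.mem_range.mp hi
  have hends₀ : 0 ≤ f 0 * f (m + 1) := mul_nonneg (hf 0) (hf _)
  rw [Finset.prod_range_succ, Finset.prod_range_succ', mul_assoc, pow_succ]
  exact mul_le_mul hmid' hends hends₀ (pow_nonneg (hends₀.trans hends) m)

namespace OrientedPerc

open Set

section Bernoulli

variable {μ : Measure Config} {p : ℝ}

lemma IsBernoulli.map_restrict (hμ : IsBernoulli μ p) (E : Finset Edge) :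
    μ.map E.restrict = Measure.pi fun _ : E => bernoulliMeasure true false ⟨p, hμ.2.1⟩ := by
  classical
  have := hμ.1
  refine Measure.ext_iff_singleton.mpr fun ξ => ?_
  have hcyl : E.restrict ⁻¹' ({ξ} : Set (E → Bool)) =
      {ω | ∀ e ∈ E, ω e = updateFinset (fun _ => false) E ξ e} := by
    ext ω
    simp only [mem_preimage, mem_singleton_iff, funext_iff, Finset.restrict, Subtype.forall,
      mem_ofPred_eq, updateFinset_def]
    exact forall₂_congr fun e he => by rw [dif_pos he]
  rw [← ENNReal.toReal_eq_toReal_iff' (measure_ne_top _ _) (measure_ne_top _ _),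
    Measure.map_apply E.measurable_restrict (measurableSet_singleton ξ), hcyl, hμ.2.2,
    Measure.pi_singleton, ENNReal.toReal_prod, ← Finset.prod_coe_sort E]
  refine Finset.prod_congr rfl fun e _ => ?_
  simp only [updateFinset_def, dif_pos e.2]
  cases ξ e <;> simp

lemma IsBernoulli.eq_infinitePi (hμ : IsBernoulli μ p) :
    μ = Measure.infinitePi fun _ : Edge => bernoulliMeasure true false ⟨p, hμ.2.1⟩ :=
  IsProjectiveLimit.unique hμ.map_restrict (Measure.isProjectiveLimit_infinitePi _)

lemma IsBernoulli.measurePreserving_comp (hμ : IsBernoulli μ p) {ρ : Edge → Edge}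
    (hρ : Injective ρ) : MeasurePreserving (fun ω : Config => ω ∘ ρ) μ μ :=
  ⟨by fun_prop, by rw [hμ.eq_infinitePi]; exact Measure.map_infinitePi_infinitePi_of_inj hρ⟩

lemma IsBernoulli.measureReal_le_of_comp (hμ : IsBernoulli μ p) {ρ : Edge → Edge}
    (hρ : Injective ρ) {A A' : Set Config} (hA : MeasurableSet A)
    (h : ∀ ω, ω ∘ ρ ∈ A → ω ∈ A') : μ.real A ≤ μ.real A' := by
  have := hμ.1
  rw [← (hμ.measurePreserving_comp hρ).measureReal_preimage hA.nullMeasurableSet]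
  exact measureReal_mono fun ω => h ω

lemma IsBernoulli.iIndepFun_eval (hμ : IsBernoulli μ p) :
    iIndepFun (fun e (ω : Config) => ω e) μ := by
  rw [hμ.eq_infinitePi]
  exact iIndepFun_infinitePi (X := fun _ => id) fun _ => measurable_id

lemma IsBernoulli.measure_inter_eq_mul (hμ : IsBernoulli μ p) {A B : Set Config}
    {E F : Finset Edge} (hA : DependsOn (· ∈ A) (E : Set Edge))
    (hB : DependsOn (· ∈ B) (F : Set Edge)) (hEF : Disjoint E F) :
    μ (A ∩ B) = μ A * μ B := by
  have hind := hμ.iIndepFun_eval.indepFun_finset E F hEF fun e => measurable_pi_apply e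
  rw [← hA.preimage_restrict_image, ← hB.preimage_restrict_image]
  exact hind.measure_inter_preimage_eq_mul _ _ (to_countable _).measurableSet
    (to_countable _).measurableSet

lemma IsBernoulli.measure_biInter_eq_prod (hμ : IsBernoulli μ p) {ι : Type*}
    {A : ι → Set Config} {E : ι → Finset Edge} (hA : ∀ i, DependsOn (· ∈ A i) (E i : Set Edge))
    (hE : Pairwise (Disjoint on E)) (s : Finset ι) :
    μ (⋂ i ∈ s, A i) = ∏ i ∈ s, μ (A i) := by
  classical
  induction s using Finset.induction_on with
  | empty => simp [hμ.1.measure_univ]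
  | insert j s hj ih =>
    have hdep : DependsOn (· ∈ ⋂ i ∈ s, A i) (s.biUnion E : Set Edge) := fun ω ω' h => by
      simp only [mem_iInter]
      exact propext <| forall₂_congr fun i hi =>
        Iff.of_eq <| hA i fun e he => h e (Finset.mem_biUnion.mpr ⟨i, hi, he⟩)
    have hdisj : Disjoint (E j) (s.biUnion E) :=
      Finset.disjoint_biUnion_right _ _ _ |>.mpr fun i hi => hE fun h => hj (h ▸ hi)
    rw [Finset.set_biInter_insert, Finset.prod_insert hj,
      hμ.measure_inter_eq_mul (hA j) hdep hdisj, ih]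

lemma IsBernoulli.measureReal_mul_le_inter (hμ : IsBernoulli μ p) {A B : Set Config}
    {E : Finset Edge} (hAE : DependsOn (· ∈ A) (E : Set Edge))
    (hBE : DependsOn (· ∈ B) (E : Set Edge)) (hA : IsUpperSet A) (hB : IsUpperSet B) :
    μ.real A * μ.real B ≤ μ.real (A ∩ B) := by
  have hpull (S : Set (E → Bool)) : μ.real (E.restrict ⁻¹' S) =
      (Measure.pi fun _ : E => bernoulliMeasure true false ⟨p, hμ.2.1⟩).real S := by
    rw [← map_measureReal_apply E.measurable_restrict (to_countable S).measurableSet,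
      hμ.map_restrict]
  rw [← hAE.preimage_restrict_image, ← hBE.preimage_restrict_image, ← preimage_inter,
    hpull, hpull, hpull]
  exact (hA.image_restrict E).measureReal_pi_mul_le_inter _ (hB.image_restrict E)

lemma IsBernoulli.one_sub_mul_one_sub_le (hμ : IsBernoulli μ p) {A B : Set Config}
    {E : Finset Edge} (hAE : DependsOn (· ∈ A) (E : Set Edge))
    (hBE : DependsOn (· ∈ B) (E : Set Edge)) (hA : IsUpperSet A) (hB : IsUpperSet B) :
    (1 - μ.real A) * (1 - μ.real B) ≤ 1 - μ.real (A ∪ B) := by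
  have := hμ.1
  have hunion := measureReal_union_add_inter (μ := μ) (s := A) hBE.measurableSet
  nlinarith [hμ.measureReal_mul_le_inter hAE hBE hA hB]

end Bernoulli

section Paths

variable {S T : Set Vtx} {ω ω' : Config} {x y : Vtx}

lemma ConnIn.mem_right (h : ConnIn S ω x y) : y ∈ S := by
  obtain ⟨hx, hxy⟩ := h
  induction hxy with
  | refl => exact hx
  | tail _ huv => exact huv.2

lemma ConnIn.conn (h : ConnIn S ω x y) : Conn ω x y :=
  Relation.ReflTransGen.mono (fun _ _ huv => huv.1) _ _ h.2

lemma ConnIn.map {σ : Vtx → Vtx} (hST : MapsTo σ S T)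
    (hstep : ∀ u ∈ S, ∀ v ∈ S, Step ω u v → Step ω' (σ u) (σ v)) (h : ConnIn S ω x y) :
    ConnIn T ω' (σ x) (σ y) := by
  obtain ⟨hx, hxy⟩ := h
  refine ⟨hST hx, ?_⟩
  induction hxy with
  | refl => rfl
  | tail hxu huv ih =>
    exact ih.tail ⟨hstep _ (ConnIn.mem_right ⟨hx, hxu⟩) _ huv.2 huv.1, hST huv.2⟩

lemma ConnIn.map_rev {σ : Vtx → Vtx} (hST : MapsTo σ S T)
    (hstep : ∀ u ∈ S, ∀ v ∈ S, Step ω u v → Step ω' (σ v) (σ u)) (h : ConnIn S ω x y) :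
    ConnIn T ω' (σ y) (σ x) := by
  obtain ⟨hx, hxy⟩ := h
  refine ⟨hST (ConnIn.mem_right ⟨hx, hxy⟩), ?_⟩
  induction hxy with
  | refl => rfl
  | tail hxu huv ih =>
    have hu := ConnIn.mem_right ⟨hx, hxu⟩
    exact .head ⟨hstep _ hu _ huv.2 huv.1, hST hu⟩ ih

lemma Step.of_comp {ρ : Edge → Edge} {σ : Vtx → Vtx}
    (hρ : ∀ e, (ρ e).1 = σ e.1 ∧ tip (ρ e) = σ (tip e)) {u v : Vtx} (h : Step (ω ∘ ρ) u v) :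
    Step ω (σ u) (σ v) := by
  obtain ⟨b, hb, rfl⟩ := h
  obtain ⟨hbase, htip⟩ := hρ (u, b)
  exact ⟨(ρ (u, b)).2, by rwa [← hbase], by rw [← htip, ← hbase]⟩

lemma Step.of_comp_rev {ρ : Edge → Edge} {σ : Vtx → Vtx}
    (hρ : ∀ e, (ρ e).1 = σ (tip e) ∧ tip (ρ e) = σ e.1) {u v : Vtx} (h : Step (ω ∘ ρ) u v) :
    Step ω (σ v) (σ u) := by
  obtain ⟨b, hb, rfl⟩ := h
  obtain ⟨hbase, htip⟩ := hρ (u, b)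
  exact ⟨(ρ (u, b)).2, by rwa [← hbase], by rw [← htip, ← hbase]⟩

end Paths

section Crossings

open Classical in
noncomputable def boxEdges (a b n : ℤ) : Finset Edge :=
  ((Finset.Icc a b ×ˢ Finset.Icc 0 n) ×ˢ Finset.univ).filter
    fun e => e.1 ∈ box a b 0 n ∧ tip e ∈ box a b 0 n

lemma mem_boxEdges {a b n : ℤ} {e : Edge} :
    e ∈ boxEdges a b n ↔ e.1 ∈ box a b 0 n ∧ tip e ∈ box a b 0 n := by
  simp only [boxEdges, Finset.mem_filter, Finset.mem_product, Finset.mem_Icc, Finset.mem_univ,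
    and_true, and_iff_right_iff_imp]
  rintro ⟨⟨h₁, h₂, h₃, h₄, -⟩, -⟩
  exact ⟨⟨h₁, h₂⟩, h₃, h₄⟩

lemma disjoint_boxEdges {a b a' b' n : ℤ} (h : b ≤ a') :
    Disjoint (boxEdges a b n) (boxEdges a' b' n) := by
  refine Finset.disjoint_left.mpr fun e he he' => ?_
  rw [mem_boxEdges] at he he'
  obtain ⟨⟨x, y⟩, _ | _⟩ := e <;> simp only [box, tip, mem_ofPred_eq] at he he' <;>
    simp at he he' <;> omega

def vCrossing (a b n : ℤ) (X Y : Set ℤ) : Set Config :=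
  {ω | ∃ x ∈ X, ∃ y ∈ Y, ConnIn (box a b 0 n) ω (x, 0) (y, n)}

variable {a b n : ℤ} {X Y X' Y' : Set ℤ}

lemma setOf_crossedVert : {ω | CrossedVert ω a b 0 n} = vCrossing a b n univ univ := by
  ext ω
  constructor
  · rintro ⟨⟨x, _⟩, ⟨y, _⟩, rfl, rfl, h⟩
    exact ⟨x, trivial, y, trivial, h⟩
  · rintro ⟨x, -, y, -, h⟩
    exact ⟨(x, 0), (y, n), rfl, rfl, h⟩

lemma vCrossing_subset_vCrossing (hX : ∀ x ∈ X, a ≤ x → x ≤ b → Even x → x ∈ X')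
    (hY : ∀ y ∈ Y, a ≤ y → y ≤ b → Even (y + n) → y ∈ Y') :
    vCrossing a b n X Y ⊆ vCrossing a b n X' Y' := by
  rintro ω ⟨x, hx, y, hy, h⟩
  obtain ⟨hx₁, hx₂, -, -, hx₃⟩ := h.1
  obtain ⟨hy₁, hy₂, -, -, hy₃⟩ := h.mem_right
  exact ⟨x, hX x hx hx₁ hx₂ (by simpa using hx₃), y, hY y hy hy₁ hy₂ hy₃, h⟩

lemma vCrossing_subset_rge {t : ℤ} : vCrossing a b n (Iic 0) (Ici t) ⊆ {ω | Rge ω n t} := by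
  rintro ω ⟨x, hx, y, hy, h⟩
  exact ⟨y, x, by simpa using h.1.2.2.2.2, hx, hy, h.conn⟩

lemma dependsOn_vCrossing : DependsOn (· ∈ vCrossing a b n X Y) (boxEdges a b n : Set Edge) := by
  have key {ω ω' : Config} (hωω' : ∀ e ∈ boxEdges a b n, ω e = ω' e) :
      ω ∈ vCrossing a b n X Y → ω' ∈ vCrossing a b n X Y := by
    rintro ⟨x, hx, y, hy, h⟩
    refine ⟨x, hx, y, hy, h.map (σ := id) (mapsTo_id _) fun u hu v hv => ?_⟩
    rintro ⟨d, hd, rfl⟩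
    exact ⟨d, hωω' _ (mem_boxEdges.mpr ⟨hu, hv⟩) ▸ hd, rfl⟩
  exact fun ω ω' h => propext ⟨key h, key fun e he => (h e he).symm⟩

lemma isUpperSet_vCrossing : IsUpperSet (vCrossing a b n X Y) := by
  rintro ω ω' hωω' ⟨x, hx, y, hy, h⟩
  refine ⟨x, hx, y, hy, h.map (σ := id) (mapsTo_id _) fun u _ v _ => ?_⟩
  rintro ⟨d, hd, rfl⟩
  exact ⟨d, by simpa [hd, Bool.le_iff_imp] using hωω' (u, d), rfl⟩

end Crossings

section Symmetries

def shiftEdge (u : ℤ) (e : Edge) : Edge := ((e.1.1 + u, e.1.2), e.2)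

def reflectEdge (m : ℤ) (e : Edge) : Edge := ((m - e.1.1, e.1.2), !e.2)

/-- The edge map of the vertex map `(x, y) ↦ (x + a, n - y)`, which reverses edges: the image of
`e` starts at the image of `tip e`. -/
def flipEdge (a n : ℤ) (e : Edge) : Edge := (((tip e).1 + a, n - (tip e).2), !e.2)

lemma shiftEdge_injective (u : ℤ) : Injective (shiftEdge u) := by
  rintro ⟨⟨x, y⟩, d⟩ ⟨⟨x', y'⟩, d'⟩ h
  simp only [shiftEdge, Prod.mk.injEq] at h ⊢
  exact ⟨⟨by omega, h.1.2⟩, h.2⟩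

lemma reflectEdge_injective (m : ℤ) : Injective (reflectEdge m) := by
  rintro ⟨⟨x, y⟩, d⟩ ⟨⟨x', y'⟩, d'⟩ h
  simp only [reflectEdge, Prod.mk.injEq, Bool.not_inj_iff] at h ⊢
  exact ⟨⟨by omega, h.1.2⟩, h.2⟩

lemma flipEdge_injective (a n : ℤ) : Injective (flipEdge a n) := by
  rintro ⟨⟨x, y⟩, _ | _⟩ ⟨⟨x', y'⟩, _ | _⟩ h <;>
    simp only [flipEdge, tip, Prod.mk.injEq] at h ⊢ <;> simp at h ⊢ <;> omega

variable {a b n : ℤ} {X Y X' Y' : Set ℤ} {ω : Config}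

lemma mem_vCrossing_of_comp_shiftEdge {u : ℤ} (hu : Even u) (hX : MapsTo (· + u) X X')
    (hY : MapsTo (· + u) Y Y') (h : ω ∘ shiftEdge u ∈ vCrossing a b n X Y) :
    ω ∈ vCrossing (a + u) (b + u) n X' Y' := by
  obtain ⟨x, hx, y, hy, hxy⟩ := h
  refine ⟨x + u, hX hx, y + u, hY hy, hxy.map (fun v hv => ?_)
    fun _ _ _ _ => Step.of_comp (σ := fun v => (v.1 + u, v.2)) ?_⟩
  · simp only [box, mem_ofPred_eq, Int.even_iff] at hv hu ⊢
    omega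
  · refine fun e => ⟨rfl, ?_⟩
    obtain ⟨⟨x, y⟩, _ | _⟩ := e <;> simp only [shiftEdge, tip] <;> ext <;> simp <;> ring

lemma mem_vCrossing_of_comp_reflectEdge {m : ℤ} (hm : Even m) (hX : MapsTo (m - ·) X X')
    (hY : MapsTo (m - ·) Y Y') (h : ω ∘ reflectEdge m ∈ vCrossing a b n X Y) :
    ω ∈ vCrossing (m - b) (m - a) n X' Y' := by
  obtain ⟨x, hx, y, hy, hxy⟩ := h
  refine ⟨m - x, hX hx, m - y, hY hy, hxy.map (fun v hv => ?_)
    fun _ _ _ _ => Step.of_comp (σ := fun v => (m - v.1, v.2)) ?_⟩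
  · simp only [box, mem_ofPred_eq, Int.even_iff] at hv hm ⊢
    omega
  · refine fun e => ⟨rfl, ?_⟩
    obtain ⟨⟨x, y⟩, _ | _⟩ := e <;> simp only [reflectEdge, tip] <;> ext <;> simp <;> ring

lemma mem_vCrossing_of_comp_flipEdge {c : ℤ} (hc : Even (c + n)) (hX : MapsTo (· + c) X Y')
    (hY : MapsTo (· + c) Y X') (h : ω ∘ flipEdge c n ∈ vCrossing a b n X Y) :
    ω ∈ vCrossing (a + c) (b + c) n X' Y' := by
  obtain ⟨x, hx, y, hy, hxy⟩ := h
  have := hxy.map_rev (T := box (a + c) (b + c) 0 n) (fun v hv => ?_)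
    fun _ _ _ _ => Step.of_comp_rev (σ := fun v => (v.1 + c, n - v.2)) ?_
  · exact ⟨y + c, hY hy, x + c, hX hx, by simpa using this⟩
  · simp only [box, mem_ofPred_eq, Int.even_iff] at hv hc ⊢
    omega
  · refine fun e => ⟨rfl, ?_⟩
    obtain ⟨⟨x, y⟩, _ | _⟩ := e <;> simp only [flipEdge, tip] <;> ext <;> simp <;> ring

end Symmetries

section Chain

variable {μ : Measure Config} {p : ℝ}

lemma IsBernoulli.V_le_measureReal_vCrossing (hμ : IsBernoulli μ p) (s n : ℕ) (i : ℤ) :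
    V μ s n ≤ μ.real (vCrossing (-(i * s)) (-(i * s) + s) n univ univ) := by
  have hmeas : MeasurableSet (vCrossing 0 s n univ univ) :=
    DependsOn.measurableSet dependsOn_vCrossing
  rw [V, ← measureReal_def, setOf_crossedVert]
  by_cases h : Even (i * s)
  · refine hμ.measureReal_le_of_comp (shiftEdge_injective (-(i * s))) hmeas fun ω hω => ?_
    simpa [add_comm] using
      mem_vCrossing_of_comp_shiftEdge h.neg (mapsTo_univ _ _) (mapsTo_univ _ _) hω
  · -- `i * s` odd forces `s` odd, so `x ↦ -(i * s) + s - x` preserves the parity of `x + y`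
    have hm : Even (-(i * s) + s) := by
      rw [Int.even_add, even_neg]
      exact iff_of_false h fun hs => h (hs.mul_left _)
    refine hμ.measureReal_le_of_comp (reflectEdge_injective (-(i * s) + s)) hmeas fun ω hω => ?_
    simpa using mem_vCrossing_of_comp_reflectEdge hm (mapsTo_univ _ _) (mapsTo_univ _ _) hω

def chainCrossing (k s n i : ℕ) : Set Config :=
  vCrossing (-(i * s)) (-(i * s) + s) n (Iic 0) (Ici (1 - k * s))

lemma chainCrossing_subset_rge (k s n i : ℕ) :
    chainCrossing k s n i ⊆ {ω | Rge ω n (-((k * s : ℕ) : ℤ) + 1)} := by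
  have ht : (1 - k * s : ℤ) = -((k * s : ℕ) : ℤ) + 1 := by push_cast; ring
  rw [chainCrossing, ht]
  exact vCrossing_subset_rge

lemma pairwise_disjoint_chainEdges (s n : ℕ) :
    Pairwise (Disjoint on fun i : ℕ => boxEdges (-(i * s)) (-(i * s) + s) n) := by
  intro i j hij
  wlog h : i < j generalizing i j
  · exact (this hij.symm (lt_of_le_of_ne (not_lt.mp h) hij.symm)).symm
  have : ((i : ℤ) + 1) * s ≤ j * s := by exact_mod_cast Nat.mul_le_mul_right s h
  exact (disjoint_boxEdges (by linarith)).symm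

lemma IsBernoulli.V_le_measureReal_chainCrossing (hμ : IsBernoulli μ p) {k s i : ℕ} (n : ℕ)
    (hs : 1 ≤ s) (hi : 0 < i) (hik : i < k) : V μ s n ≤ μ.real (chainCrossing k s n i) := by
  have := hμ.1
  refine (hμ.V_le_measureReal_vCrossing s n i).trans (measureReal_mono ?_)
  have : (s : ℤ) ≤ i * s := by exact_mod_cast Nat.le_mul_of_pos_left s hi
  have : (i * s : ℤ) + s ≤ k * s := by
    exact_mod_cast Nat.add_one_mul i s ▸ Nat.mul_le_mul_right s hik
  refine vCrossing_subset_vCrossing (fun x _ _ hx _ => ?_) fun y _ hy _ _ => ?_ <;>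
    simp only [mem_Iic, mem_Ici] <;> omega

lemma IsBernoulli.measureReal_vCrossing_le_chainCrossing_self (hμ : IsBernoulli μ p)
    {k s : ℕ} (n : ℕ) (hk : 1 ≤ k) (hpar : Even (k * s + n : ℤ)) :
    μ.real (vCrossing 0 s n (Ici 1) univ) ≤ μ.real (chainCrossing k s n k) := by
  have hks : (s : ℤ) ≤ k * s := by exact_mod_cast Nat.le_mul_of_pos_left s hk
  refine hμ.measureReal_le_of_comp (flipEdge_injective (-(k * s)) n)
    (DependsOn.measurableSet dependsOn_vCrossing) fun ω hω => ?_
  have hpar' : Even (-(k * s) + n : ℤ) := by simpa [Int.even_add] using hpar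
  have := mem_vCrossing_of_comp_flipEdge (X' := univ) (Y' := Ici (1 - k * s)) hpar'
    (fun x hx => by simp only [mem_Ici] at hx ⊢; omega) (mapsTo_univ _ _) hω
  rw [zero_add, add_comm] at this
  exact vCrossing_subset_vCrossing (fun x _ _ hx _ => by simp only [mem_Iic]; omega)
    (fun y hy _ _ _ => hy) this

lemma IsBernoulli.V_le_measureReal_chainCrossing_self (hμ : IsBernoulli μ p) {k s : ℕ}
    (n : ℕ) (hk : 1 ≤ k) (hpar : ¬ Even (k * s + n : ℤ)) :
    V μ s n ≤ μ.real (chainCrossing k s n k) := by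
  have := hμ.1
  have hks : (s : ℤ) ≤ k * s := by exact_mod_cast Nat.le_mul_of_pos_left s hk
  refine (hμ.V_le_measureReal_vCrossing s n k).trans (measureReal_mono ?_)
  refine vCrossing_subset_vCrossing (fun x _ _ hx _ => ?_) fun y _ hy _ hy' => ?_
  · simp only [mem_Iic]; omega
  · simp only [mem_Ici]
    rcases hy.eq_or_lt with rfl | hlt
    · exact absurd (by simpa [Int.even_add] using hy') hpar
    · omega

lemma IsBernoulli.one_sub_mul_one_sub_chainCrossing_le (hμ : IsBernoulli μ p) {k s : ℕ}
    (n : ℕ) (hk : 1 ≤ k) (hs : 1 ≤ s) :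
    (1 - μ.real (chainCrossing k s n 0)) * (1 - μ.real (chainCrossing k s n k)) ≤
      1 - V μ s n := by
  have := hμ.1
  set C₀ := vCrossing 0 s n (Iic 0) univ
  set C₁ := vCrossing 0 s n (Ici 1) univ
  have hC₀ : μ.real C₀ ≤ μ.real (chainCrossing k s n 0) := by
    have hks : 1 ≤ k * s := Nat.mul_pos hk hs
    refine measureReal_mono ?_
    simp only [chainCrossing, CharP.cast_eq_zero, zero_mul, neg_zero, zero_add]
    exact vCrossing_subset_vCrossing (fun x hx _ _ _ => hx) fun y _ hy _ _ => by
      simp only [mem_Ici]; omega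
  have hV : V μ s n ≤ μ.real (C₀ ∪ C₁) := by
    rw [V, ← measureReal_def, setOf_crossedVert]
    refine measureReal_mono ?_
    rintro ω ⟨x, -, y, -, h⟩
    rcases le_or_gt x 0 with hx | hx
    exacts [Or.inl ⟨x, hx, y, trivial, h⟩, Or.inr ⟨x, hx, y, trivial, h⟩]
  have h₀ : μ.real (chainCrossing k s n 0) ≤ 1 := measureReal_le_one
  have hk' : μ.real (chainCrossing k s n k) ≤ 1 := measureReal_le_one
  by_cases hpar : Even (k * s + n : ℤ)
  · have := hμ.one_sub_mul_one_sub_le (A := C₀) (B := C₁) dependsOn_vCrossing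
      dependsOn_vCrossing isUpperSet_vCrossing isUpperSet_vCrossing
    nlinarith [hμ.measureReal_vCrossing_le_chainCrossing_self n hk hpar,
      measureReal_nonneg (μ := μ) (s := C₀), measureReal_nonneg (μ := μ) (s := C₁)]
  · nlinarith [hμ.V_le_measureReal_chainCrossing_self n hk hpar,
      measureReal_nonneg (μ := μ) (s := chainCrossing k s n 0)]

end Chain

theorem rightmost_point_lower_tail_general (μ : Measure Config) (p : ℝ) (hB : IsBernoulli μ p)
    (k s n : ℕ) (hk : 1 ≤ k) (hs : 1 ≤ s) :
    (μ {ω | ¬ Rge ω (n : ℤ) (-((k * s : ℕ) : ℤ) + 1)}).toReal ≤ (1 - V μ s n) ^ k := by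
  have := hB.1
  have hdep (i : ℕ) : DependsOn (· ∈ (chainCrossing k s n i)ᶜ)
      (boxEdges (-(i * s)) (-(i * s) + s) n : Set Edge) :=
    DependsOn.mem_compl dependsOn_vCrossing
  calc (μ {ω | ¬ Rge ω n (-((k * s : ℕ) : ℤ) + 1)}).toReal
      ≤ μ.real (⋂ i ∈ Finset.range (k + 1), (chainCrossing k s n i)ᶜ) :=
        measureReal_mono fun ω hω =>
          mem_iInter₂.mpr fun i _ hi => hω (chainCrossing_subset_rge k s n i hi)
    _ = ∏ i ∈ Finset.range (k + 1), (1 - μ.real (chainCrossing k s n i)) := by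
        rw [measureReal_def, hB.measure_biInter_eq_prod hdep (pairwise_disjoint_chainEdges s n),
          ENNReal.toReal_prod]
        exact Finset.prod_congr rfl fun i _ =>
          probReal_compl_eq_one_sub (DependsOn.measurableSet dependsOn_vCrossing)
    _ ≤ (1 - V μ s n) ^ k :=
        prod_range_succ_le_pow_of_ends hk (fun i => sub_nonneg.mpr measureReal_le_one)
          (fun i hi hik => sub_le_sub_left (hB.V_le_measureReal_chainCrossing n hs hi hik) 1)
          (hB.one_sub_mul_one_sub_chainCrossing_le n hk hs)

/-- `P_p(R_n ≤ -k·s) ≤ (1 - V_p(s,n))^k`: the event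
`R_n ≤ -ks` (including `R_n = -∞`) forces `k` disjoint translates of
`[0,s] × [0,n]` to each fail to be crossed vertically. Here `R_n ≤ -ks` is
expressed as the failure of `R_n ≥ -ks + 1`. -/
theorem rightmost_point_lower_tail (μ : Measure Config) (p : ℝ) (hB : IsBernoulli μ p)
    (k s n : ℕ) (hk : 1 ≤ k) (hs : 1 ≤ s) (hn : 1 ≤ n) :
    (μ {ω | ¬ Rge ω (n : ℤ) (-((k * s : ℕ) : ℤ) + 1)}).toReal ≤ (1 - V μ s n) ^ k :=
  rightmost_point_lower_tail_general μ p hB k s n hk hs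

end OrientedPerc
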